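/- For every d ≥ 1, the number of minimal permutations with d descents and of size 2d equals the d-th Catalan number C_d = (1/(d+1)) · binom(2d, d). -/

import Mathlib

/-- `σ` has a descent at (0-based) position `i`, i.e. `σ i > σ (i+1)`. -/
def IsDescentAt {n : ℕ} (σ : Equiv.Perm (Fin n)) (i : ℕ) : Prop :=
  ∃ h : i + 1 < n, σ ⟨i + 1, h⟩ < σ ⟨i, Nat.lt_of_succ_lt h⟩

/-- The number of descents of `σ`. -/
noncomputable def descNum {n : ℕ} (σ : Equiv.Perm (Fin n)) : ℕ :=
  {i : ℕ | IsDescentAt σ i}.ncard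

/-- `π` is a pattern of `σ` (written `π ≺ σ`). -/
def IsPattern {k n : ℕ} (π : Equiv.Perm (Fin k)) (σ : Equiv.Perm (Fin n)) : Prop :=
  ∃ f : Fin k ↪o Fin n, ∀ ℓ m : Fin k, π ℓ < π m → σ (f ℓ) < σ (f m)

/-- `σ` is a minimal permutation with `d` descents: it has `d` descents and every
pattern `π ≺ σ` with `π ≠ σ` (equivalently, of strictly smaller size) has fewer
than `d` descents. -/
def MinimalWithDescents (d : ℕ) {n : ℕ} (σ : Equiv.Perm (Fin n)) : Prop :=
  descNum σ = d ∧
    ∀ (k : ℕ) (π : Equiv.Perm (Fin k)), k < n → IsPattern π σ → descNum π < d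


/-!
Deleting one entry of a permutation merges the two adjacent pairs around it into one pair, and
every other descent survives. So in a minimal permutation `σ` with `d` descents every deletion
must destroy a descent; for `σ` of size `2d` this forces the descents to be exactly the even
positions (counting from `0`) and `σ i < σ (i + 2)` for all `i`. Thus `σ` is minimal iff its
entries at even positions and at odd positions form the two rows of a standard Young tableau of
shape `(d, d)`; conversely such a `σ` avoids `321`, so no pattern of `σ` has two adjacent
descents, and a pattern of size `k < 2d` has at most `k / 2 < d` of them. Marking the values at
odd positions as up-steps turns these tableaux bijectively into Dyck words of semilength `d`.
-/

open Finset

variable {n : ℕ}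

section Descents

def entry (σ : Equiv.Perm (Fin n)) (i : ℕ) : ℕ :=
  if h : i < n then σ ⟨i, h⟩ else 0

lemma entry_of_lt (σ : Equiv.Perm (Fin n)) {i : ℕ} (h : i < n) : entry σ i = σ ⟨i, h⟩ :=
  dif_pos h

lemma eq_of_entry_eq (σ : Equiv.Perm (Fin n)) {i j : ℕ} (hi : i < n) (hj : j < n)
    (h : entry σ i = entry σ j) : i = j := by
  rw [entry_of_lt σ hi, entry_of_lt σ hj, Fin.val_inj, σ.apply_eq_iff_eq] at h
  exact Fin.mk.inj h

lemma isDescentAt_iff_entry (σ : Equiv.Perm (Fin n)) (i : ℕ) :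
    IsDescentAt σ i ↔ i + 1 < n ∧ entry σ (i + 1) < entry σ i := by
  constructor
  · rintro ⟨h, hlt⟩
    exact ⟨h, by rwa [entry_of_lt σ h, entry_of_lt σ (by omega)]⟩
  · rintro ⟨h, hlt⟩
    rw [entry_of_lt σ h, entry_of_lt σ (by omega)] at hlt
    exact ⟨h, hlt⟩

instance (σ : Equiv.Perm (Fin n)) : DecidablePred (IsDescentAt σ) := fun i =>
  decidable_of_iff _ (isDescentAt_iff_entry σ i).symm

lemma finite_setOf_isDescentAt (σ : Equiv.Perm (Fin n)) : {i | IsDescentAt σ i}.Finite :=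
  (Set.finite_Iio n).subset fun i ⟨h, _⟩ => Set.mem_Iio.mpr (by omega)

lemma descNum_eq_card_filter (σ : Equiv.Perm (Fin n)) :
    descNum σ = #{i ∈ range (n - 1) | IsDescentAt σ i} := by
  rw [descNum, ← Set.ncard_coe_finset]
  congr 1
  ext i
  simp only [coe_filter, mem_range, Set.mem_ofPred_eq]
  exact ⟨fun h => ⟨by obtain ⟨h, -⟩ := h; omega, h⟩, And.right⟩

lemma descNum_le_half_of_not_isDescentAt_succ (σ : Equiv.Perm (Fin n))
    (h : ∀ i, IsDescentAt σ i → ¬ IsDescentAt σ (i + 1)) : descNum σ ≤ n / 2 := by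
  rw [descNum_eq_card_filter]
  calc #{i ∈ range (n - 1) | IsDescentAt σ i} ≤ #(range (n / 2)) := by
        refine card_le_card_of_injOn (· / 2) (fun i hi => ?_) (fun i hi j hj hij => ?_)
        · simp only [coe_filter, mem_range, Set.mem_ofPred_eq, coe_range, Set.mem_Iio] at hi ⊢
          omega
        · simp only [coe_filter, mem_range, Set.mem_ofPred_eq] at hi hj hij
          by_contra hne
          rcases Nat.lt_or_gt_of_ne hne with hlt | hlt
          · obtain rfl : j = i + 1 := by omega
            exact h i hi.2 hj.2
          · obtain rfl : i = j + 1 := by omega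
            exact h j hj.2 hi.2
    _ = n / 2 := card_range _

lemma not_isDescentAt_succ_of_isPattern {k : ℕ} {σ : Equiv.Perm (Fin n)}
    {π : Equiv.Perm (Fin k)}
    (hσ : ∀ p q r : Fin n, p < q → q < r → σ q < σ p → σ r < σ q → False)
    (hπ : IsPattern π σ) (i : ℕ) : IsDescentAt π i → ¬ IsDescentAt π (i + 1) := by
  obtain ⟨f, hf⟩ := hπ
  rintro ⟨h₁, hlt₁⟩ ⟨h₂, hlt₂⟩
  exact hσ _ _ _ (f.strictMono (Fin.mk_lt_mk.mpr (by omega)))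
    (f.strictMono (Fin.mk_lt_mk.mpr (by omega))) (hf _ _ hlt₁) (hf _ _ hlt₂)

end Descents

section Deletion

def standardize {m : ℕ} {α : Type*} [LinearOrder α] (g : Fin m → α) : Equiv.Perm (Fin m) :=
  (Tuple.sort g)⁻¹

lemma standardize_lt_standardize_iff {m : ℕ} {α : Type*} [LinearOrder α] {g : Fin m → α}
    (hg : Function.Injective g) (a b : Fin m) :
    standardize g a < standardize g b ↔ g a < g b := by
  have hmono : StrictMono (g ∘ Tuple.sort g) :=
    (Tuple.monotone_sort g).strictMono_of_injective (hg.comp (Tuple.sort g).injective)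
  simpa [standardize] using
    (hmono.lt_iff_lt (a := (Tuple.sort g)⁻¹ a) (b := (Tuple.sort g)⁻¹ b)).symm

def skip (t j : ℕ) : ℕ := if j < t then j else j + 1

def skipEmb (n t : ℕ) : Fin (n - 1) ↪o Fin n :=
  OrderEmbedding.ofStrictMono (fun j => ⟨skip t j, by unfold skip; split <;> omega⟩)
    (fun a b hab => by
      simp only [Fin.mk_lt_mk, skip]
      have : (a : ℕ) < b := hab
      split <;> split <;> omega)

def deleteAt (σ : Equiv.Perm (Fin n)) (t : ℕ) : Equiv.Perm (Fin (n - 1)) :=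
  standardize (σ ∘ skipEmb n t)

lemma deleteAt_lt_deleteAt_iff (σ : Equiv.Perm (Fin n)) (t : ℕ) (a b : Fin (n - 1)) :
    deleteAt σ t a < deleteAt σ t b ↔ σ (skipEmb n t a) < σ (skipEmb n t b) :=
  standardize_lt_standardize_iff (σ.injective.comp (skipEmb n t).injective) a b

lemma isPattern_deleteAt (σ : Equiv.Perm (Fin n)) (t : ℕ) : IsPattern (deleteAt σ t) σ :=
  ⟨skipEmb n t, fun a b => (deleteAt_lt_deleteAt_iff σ t a b).mp⟩

lemma isDescentAt_deleteAt_iff (σ : Equiv.Perm (Fin n)) (t j : ℕ) :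
    IsDescentAt (deleteAt σ t) j ↔
      j + 2 < n ∧ entry σ (skip t (j + 1)) < entry σ (skip t j) := by
  have hskip : ∀ j, j + 1 < n → skip t j < n := fun j hj => by unfold skip; split <;> omega
  constructor
  · rintro ⟨h, hlt⟩
    rw [deleteAt_lt_deleteAt_iff] at hlt
    exact ⟨by omega, by
      rwa [entry_of_lt σ (hskip _ (by omega)), entry_of_lt σ (hskip _ (by omega))]⟩
  · rintro ⟨h, hlt⟩
    rw [entry_of_lt σ (hskip _ (by omega)), entry_of_lt σ (hskip _ (by omega))] at hlt
    exact ⟨by omega, (deleteAt_lt_deleteAt_iff σ t _ _).mpr hlt⟩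

variable {σ : Equiv.Perm (Fin n)} {t i : ℕ}

lemma isDescentAt_deleteAt_of_lt (ht : t < n) (hi : i + 1 < t) (h : IsDescentAt σ i) :
    IsDescentAt (deleteAt σ t) i := by
  rw [isDescentAt_iff_entry] at h
  rw [isDescentAt_deleteAt_iff]
  exact ⟨by omega, by simpa [skip, hi, show i < t by omega] using h.2⟩

lemma isDescentAt_deleteAt_of_gt (hi : t < i) (h : IsDescentAt σ i) :
    IsDescentAt (deleteAt σ t) (i - 1) := by
  obtain ⟨i, rfl⟩ : ∃ k, i = k + 1 := ⟨i - 1, by omega⟩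
  rw [isDescentAt_iff_entry] at h
  rw [isDescentAt_deleteAt_iff]
  refine ⟨by omega, ?_⟩
  simpa [skip, show ¬ i < t by omega, show ¬ i + 1 < t by omega] using h.2

lemma descNum_le_descNum_deleteAt (ht : t < n)
    (hleft : 0 < t → IsDescentAt σ (t - 1) →
      ¬ IsDescentAt σ t ∧ IsDescentAt (deleteAt σ t) (t - 1))
    (hright : IsDescentAt σ t →
      0 < t ∧ ¬ IsDescentAt σ (t - 1) ∧ IsDescentAt (deleteAt σ t) (t - 1)) :
    descNum σ ≤ descNum (deleteAt σ t) := by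
  refine Set.ncard_le_ncard_of_injOn (fun i => if i < t then i else i - 1) (fun i hi => ?_)
    (fun i hi j hj hij => ?_) (finite_setOf_isDescentAt _)
  · rcases lt_trichotomy (i + 1) t with h | rfl | h
    · rw [Set.mem_ofPred_eq, if_pos (by omega)]
      exact isDescentAt_deleteAt_of_lt ht h hi
    · rw [Set.mem_ofPred_eq, if_pos (by omega)]
      exact (hleft (by omega) hi).2
    rcases (Nat.lt_succ_iff.mp h).lt_or_eq with h | rfl
    · rw [Set.mem_ofPred_eq, if_neg (by omega)]
      exact isDescentAt_deleteAt_of_gt h hi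
    · rw [Set.mem_ofPred_eq, if_neg (by omega)]
      exact (hright hi).2.2
  · have hpair : ∀ k, IsDescentAt σ k → IsDescentAt σ (k + 1) → k + 1 ≠ t := by
      rintro k hk hk₁ rfl
      exact (hleft (by omega) hk).1 hk₁
    simp only at hij
    split_ifs at hij
    · exact hij
    · obtain rfl : j = i + 1 := by omega
      exact absurd (by omega) (hpair i hi hj)
    · obtain rfl : i = j + 1 := by omega
      exact absurd (by omega) (hpair j hj hi)
    · by_contra hne
      obtain rfl : t = 0 := by omega
      rcases (by omega : i = 0 ∨ j = 0) with rfl | rfl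
      · exact (hright hi).1.false
      · exact (hright hj).1.false

end Deletion

section Tableau

variable {d : ℕ}

def evenPos (i : Fin d) : Fin (2 * d) := ⟨2 * i, by omega⟩

def oddPos (i : Fin d) : Fin (2 * d) := ⟨2 * i + 1, by omega⟩

lemma evenPos_or_oddPos (p : Fin (2 * d)) :
    ∃ i : Fin d, p = evenPos i ∧ (p : ℕ) % 2 = 0 ∨ p = oddPos i ∧ (p : ℕ) % 2 = 1 :=
  ⟨⟨p / 2, by omega⟩, by simp only [evenPos, oddPos, Fin.ext_iff]; omega⟩

lemma evenPos_injective : Function.Injective (evenPos (d := d)) :=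
  fun a b h => Fin.ext (by simpa [evenPos] using h)

lemma oddPos_injective : Function.Injective (oddPos (d := d)) :=
  fun a b h => Fin.ext (by simpa [oddPos] using h)

lemma evenPos_ne_oddPos (i j : Fin d) : evenPos i ≠ oddPos j := fun h => by
  simp only [evenPos, oddPos, Fin.ext_iff] at h
  omega

structure IsTableauPerm (σ : Equiv.Perm (Fin (2 * d))) : Prop where
  strictMono_even : StrictMono (σ ∘ evenPos)
  strictMono_odd : StrictMono (σ ∘ oddPos)
  odd_lt_even : ∀ i, σ (oddPos i) < σ (evenPos i)

namespace IsTableauPerm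

variable {σ : Equiv.Perm (Fin (2 * d))} (hσ : IsTableauPerm σ)
include hσ

lemma lt_of_lt_of_mod_eq {p q : Fin (2 * d)} (hpq : p < q) (hpar : (p : ℕ) % 2 = q % 2) :
    σ p < σ q := by
  obtain ⟨i, ⟨rfl, hp⟩ | ⟨rfl, hp⟩⟩ := evenPos_or_oddPos p <;>
    obtain ⟨j, ⟨rfl, hq⟩ | ⟨rfl, hq⟩⟩ := evenPos_or_oddPos q
  · have := Fin.lt_def.mp hpq
    exact hσ.strictMono_even (Fin.lt_def.mpr (by simp only [evenPos] at this; omega))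
  · omega
  · omega
  · have := Fin.lt_def.mp hpq
    exact hσ.strictMono_odd (Fin.lt_def.mpr (by simp only [oddPos] at this; omega))

lemma avoids_321 (p q r : Fin (2 * d)) (hpq : p < q) (hqr : q < r) (hqp : σ q < σ p)
    (hrq : σ r < σ q) : False := by
  rcases (by omega : (p : ℕ) % 2 = q % 2 ∨ (q : ℕ) % 2 = r % 2 ∨ (p : ℕ) % 2 = r % 2)
    with h | h | h
  · exact (hσ.lt_of_lt_of_mod_eq hpq h).not_gt hqp
  · exact (hσ.lt_of_lt_of_mod_eq hqr h).not_gt hrq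
  · exact (hσ.lt_of_lt_of_mod_eq (hpq.trans hqr) h).not_gt (hrq.trans hqp)

lemma isDescentAt_iff (i : ℕ) : IsDescentAt σ i ↔ i % 2 = 0 ∧ i + 1 < 2 * d := by
  constructor
  · rintro ⟨h, hlt⟩
    refine ⟨?_, h⟩
    by_contra hodd
    have h₁ : σ ⟨i, by omega⟩ < σ ⟨i + 2, by omega⟩ :=
      hσ.lt_of_lt_of_mod_eq (Fin.mk_lt_mk.mpr (by omega)) (by simp)
    have h₂ := hσ.odd_lt_even ⟨i / 2 + 1, by omega⟩
    simp only [evenPos, oddPos, show 2 * (i / 2 + 1) = i + 1 by omega] at h₂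
    exact (h₁.trans h₂).not_gt hlt
  · rintro ⟨heven, h⟩
    have := hσ.odd_lt_even ⟨i / 2, by omega⟩
    simp only [evenPos, oddPos, show 2 * (i / 2) = i by omega] at this
    exact ⟨h, this⟩

lemma descNum_eq : descNum σ = d := by
  have : {i ∈ range (2 * d - 1) | IsDescentAt σ i} = (range d).image (2 * ·) := by
    ext i
    simp only [mem_filter, mem_range, hσ.isDescentAt_iff, mem_image]
    exact ⟨fun h => ⟨i / 2, by omega, by omega⟩, by rintro ⟨c, hc, rfl⟩; omega⟩
  rw [descNum_eq_card_filter, this, card_image_of_injective _ (fun a b h => by simpa using h),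
    card_range]

lemma minimalWithDescents : MinimalWithDescents d σ := by
  refine ⟨hσ.descNum_eq, fun k π hk hπ => ?_⟩
  have := descNum_le_half_of_not_isDescentAt_succ π
    (not_isDescentAt_succ_of_isPattern hσ.avoids_321 hπ)
  omega

end IsTableauPerm

lemma isTableauPerm_of_entry_lt (σ : Equiv.Perm (Fin (2 * d)))
    (hdesc : ∀ c < d, entry σ (2 * c + 1) < entry σ (2 * c))
    (hstep : ∀ i, i + 2 < 2 * d → entry σ i < entry σ (i + 2)) : IsTableauPerm σ := by
  have hrow : ∀ r < 2, ∀ a b : Fin d, a < b →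
      entry σ (2 * a + r) < entry σ (2 * b + r) := by
    intro r hr a b hab
    have hmono : StrictMonoOn (fun c => entry σ (2 * c + r)) (Set.Iic (d - 1)) :=
      strictMonoOn_Iic_of_lt_succ fun m hm => by
        simpa [Order.succ_eq_add_one, mul_add, add_right_comm] using hstep (2 * m + r) (by omega)
    exact hmono (Set.mem_Iic.mpr (by omega)) (Set.mem_Iic.mpr (by omega)) hab
  refine ⟨fun a b hab => ?_, fun a b hab => ?_, fun c => ?_⟩
  · have := hrow 0 (by omega) a b hab
    rwa [entry_of_lt σ (by omega), entry_of_lt σ (by omega)] at this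
  · have := hrow 1 (by omega) a b hab
    rwa [entry_of_lt σ (by omega), entry_of_lt σ (by omega)] at this
  · have := hdesc c c.isLt
    rwa [entry_of_lt σ (by omega), entry_of_lt σ (by omega)] at this

end Tableau

section MinimalIsTableau

lemma eq_image_odd_of_not_consecutive {A : Finset ℕ} {k : ℕ}
    (hA : ∀ x ∈ A, 0 < x ∧ x < 2 * k) (hcons : ∀ x ∈ A, x + 1 ∉ A) (hcard : #A = k) :
    A = (range k).image (2 * · + 1) := by
  have hsum : ∀ f : ℕ → ℕ, (∀ x ∈ A, ∀ y ∈ A, x < y → f x = f y → y = x + 1) →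
      (∀ x ∈ A, f x < k) → ∑ x ∈ A, f x = ∑ c ∈ range k, c := by
    intro f hf hk
    have hinj : Set.InjOn f A := fun x hx y hy hxy => by
      by_contra hne
      rcases Nat.lt_or_gt_of_ne hne with h | h
      · exact hcons x hx (hf x hx y hy h hxy ▸ hy)
      · exact hcons y hy (hf y hy x hx h hxy.symm ▸ hx)
    have himage : A.image f = range k := eq_of_subset_of_card_le
      (fun y hy => by
        obtain ⟨x, hx, rfl⟩ := mem_image.mp hy
        exact mem_range.mpr (hk x hx))
      (by rw [card_range, card_image_of_injOn hinj, hcard])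
    rw [← himage, sum_image hinj]
  -- both halvings enumerate `range k`, while `(x - 1) / 2 ≤ x / 2` with equality only for odd `x`
  have hhalf := hsum (· / 2) (fun x hx y hy h h' => by omega)
    (fun x hx => by have := hA x hx; omega)
  have hhalf' := hsum (fun x => (x - 1) / 2)
    (fun x hx y hy h h' => by have := hA x hx; have := hA y hy; omega)
    (fun x hx => by have := hA x hx; omega)
  have hodd : ∀ x ∈ A, (x - 1) / 2 = x / 2 :=
    (sum_eq_sum_iff_of_le fun x _ => by omega).mp (hhalf'.trans hhalf.symm)
  refine eq_of_subset_of_card_le (fun x hx => ?_) ?_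
  · have := hA x hx
    have := hodd x hx
    exact mem_image.mpr ⟨x / 2, mem_range.mpr (by omega), by omega⟩
  · rw [card_image_of_injective _ (fun a b h => by simpa using h), card_range, hcard]

namespace MinimalWithDescents

variable {d : ℕ}

section

variable {σ : Equiv.Perm (Fin n)} (hm : MinimalWithDescents d σ)
include hm

lemma descNum_deleteAt_lt {t : ℕ} (ht : t < n) : descNum (deleteAt σ t) < descNum σ :=
  hm.1 ▸ hm.2 (n - 1) _ (by omega) (isPattern_deleteAt σ t)

lemma isDescentAt_zero (hn : 2 ≤ n) : IsDescentAt σ 0 := by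
  by_contra h
  exact (hm.descNum_deleteAt_lt (t := 0) (by omega)).not_ge
    (descNum_le_descNum_deleteAt (by omega) (fun h₀ => absurd h₀ (lt_irrefl 0))
      (fun h' => absurd h' h))

lemma isDescentAt_sub_two (hn : 2 ≤ n) : IsDescentAt σ (n - 2) := by
  by_contra h
  exact (hm.descNum_deleteAt_lt (t := n - 1) (by omega)).not_ge
    (descNum_le_descNum_deleteAt (by omega)
      (fun _ h' => absurd h' (by rwa [show n - 1 - 1 = n - 2 by omega]))
      (fun ⟨h', _⟩ => by omega))

lemma isDescentAt_or_isDescentAt_succ {i : ℕ} (hi : i + 2 < n) :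
    IsDescentAt σ i ∨ IsDescentAt σ (i + 1) := by
  by_contra! h
  exact (hm.descNum_deleteAt_lt (t := i + 1) (by omega)).not_ge
    (descNum_le_descNum_deleteAt (by omega) (fun _ h' => absurd h' (by simpa using h.1))
      (fun h' => absurd h' h.2))

end

variable {σ : Equiv.Perm (Fin (2 * d))} (hm : MinimalWithDescents d σ)
include hm

lemma isDescentAt_iff (i : ℕ) : IsDescentAt σ i ↔ i % 2 = 0 ∧ i + 1 < 2 * d := by
  rcases Nat.eq_zero_or_pos d with rfl | hd
  · exact ⟨fun ⟨h, _⟩ => by omega, fun h => by omega⟩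
  set A := {i ∈ range (2 * d - 1) | ¬ IsDescentAt σ i}
  have hA : ∀ x ∈ A, 0 < x ∧ x < 2 * (d - 1) := fun x hx => by
    obtain ⟨hx, hasc⟩ := mem_filter.mp hx
    have h₀ := hm.isDescentAt_zero (by omega)
    have h₁ := hm.isDescentAt_sub_two (by omega)
    rw [mem_range] at hx
    refine ⟨Nat.pos_of_ne_zero fun h => hasc (h ▸ h₀), ?_⟩
    by_contra
    exact hasc (by rwa [show x = 2 * d - 2 by omega])
  have hcons : ∀ x ∈ A, x + 1 ∉ A := fun x hx hx₁ => by
    obtain ⟨hx, hasc⟩ := mem_filter.mp hx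
    obtain ⟨hx₁, hasc₁⟩ := mem_filter.mp hx₁
    rw [mem_range] at hx₁
    exact (hm.isDescentAt_or_isDescentAt_succ (by omega)).elim hasc hasc₁
  have hcard : #A = d - 1 := by
    have := card_filter_add_card_filter_not (s := range (2 * d - 1)) (IsDescentAt σ)
    rw [← descNum_eq_card_filter, hm.1, card_range] at this
    change d + #A = 2 * d - 1 at this
    omega
  have hA_eq := eq_image_odd_of_not_consecutive hA hcons hcard
  constructor
  · intro h
    refine ⟨?_, h.1⟩
    by_contra hodd
    have : i ∈ A :=
      hA_eq ▸ mem_image.mpr ⟨i / 2, mem_range.mpr (by have := h.1; omega), by omega⟩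
    exact (mem_filter.mp this).2 h
  · rintro ⟨heven, hi⟩
    by_contra h
    have : i ∈ A := mem_filter.mpr ⟨mem_range.mpr (by omega), h⟩
    rw [hA_eq, mem_image] at this
    obtain ⟨c, -, rfl⟩ := this
    omega

lemma entry_lt_entry_add_two {i : ℕ} (hi : i + 2 < 2 * d) : entry σ i < entry σ (i + 2) := by
  by_contra! hle
  have hlt : entry σ (i + 2) < entry σ i :=
    hle.lt_of_ne fun h => absurd (eq_of_entry_eq σ (by omega) (by omega) h) (by omega)
  -- deleting position `i + 1` makes the entries at `i` and `i + 2` adjacent, a descent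
  have hbridge : IsDescentAt (deleteAt σ (i + 1)) (i + 1 - 1) := by
    rw [isDescentAt_deleteAt_iff]
    exact ⟨by omega, by simpa [skip] using hlt⟩
  refine (hm.descNum_deleteAt_lt (t := i + 1) (by omega)).not_ge
    (descNum_le_descNum_deleteAt (by omega) (fun _ h => ⟨?_, hbridge⟩)
      (fun h => ⟨by omega, ?_, hbridge⟩))
  · rw [hm.isDescentAt_iff] at h ⊢
    omega
  · rw [hm.isDescentAt_iff] at h ⊢
    omega

lemma isTableauPerm : IsTableauPerm σ :=
  isTableauPerm_of_entry_lt σ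
    (fun c hc => ((isDescentAt_iff_entry σ _).mp
      ((hm.isDescentAt_iff _).mpr ⟨by omega, by omega⟩)).2)
    (fun _ hi => hm.entry_lt_entry_add_two hi)

end MinimalWithDescents

end MinimalIsTableau

section Dyck

open DyckStep

lemma count_take_ofFn {α : Type*} [DecidableEq α] (f : Fin n → α) (a : α) (t : ℕ) :
    ((List.ofFn f).take t).count a = #{v : Fin n | (v : ℕ) < t ∧ f v = a} := by
  induction n generalizing t with
  | zero => simp
  | succ n ih =>
    cases t with
    | zero => simp
    | succ t =>
      rw [List.ofFn_succ, List.take_succ_cons, List.count_cons, ih, Fin.card_filter_univ_succ]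
      by_cases h : f 0 = a <;> simp [h]

def stepWord (S : Finset (Fin n)) : List DyckStep :=
  List.ofFn fun v => if v ∈ S then U else D

lemma stepWord_injective : Function.Injective (stepWord (n := n)) := by
  intro S T h
  ext v
  have := congrFun (List.ofFn_injective h) v
  by_cases hS : v ∈ S <;> by_cases hT : v ∈ T <;> simp_all

lemma stepWord_filter_eq_U (l : List DyckStep) (hl : l.length = n) :
    stepWord {v : Fin n | l[v.val]'(by omega) = U} = l := by
  apply List.ext_getElem (by simp [stepWord, hl])
  intro i h₁ h₂
  simp only [stepWord, List.getElem_ofFn, mem_filter, mem_univ, true_and]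
  rcases l[i].dichotomy with h | h <;> simp [h]

lemma count_U_take_stepWord (S : Finset (Fin n)) (t : ℕ) :
    ((stepWord S).take t).count U = #{v ∈ S | v.val < t} := by
  rw [stepWord, count_take_ofFn]
  congr 1
  ext v
  by_cases hv : v ∈ S <;> simp [hv]

lemma count_D_take_stepWord (S : Finset (Fin n)) (t : ℕ) :
    ((stepWord S).take t).count D = #{v ∈ Sᶜ | v.val < t} := by
  rw [stepWord, count_take_ofFn]
  congr 1
  ext v
  by_cases hv : v ∈ S <;> simp [hv]

lemma count_U_stepWord (S : Finset (Fin n)) : (stepWord S).count U = #S := by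
  rw [← List.take_of_length_le (l := stepWord S) (i := n) (by simp [stepWord]),
    count_U_take_stepWord, filter_true_of_mem fun v _ => v.isLt]

lemma count_D_stepWord (S : Finset (Fin n)) : (stepWord S).count D = #Sᶜ := by
  rw [← List.take_of_length_le (l := stepWord S) (i := n) (by simp [stepWord]),
    count_D_take_stepWord, filter_true_of_mem fun v _ => v.isLt]

variable {d : ℕ}

def IsBallotSet (d : ℕ) (S : Finset (Fin (2 * d))) : Prop :=
  #S = d ∧ ∀ t : ℕ, #{v ∈ Sᶜ | v.val < t} ≤ #{v ∈ S | v.val < t}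

lemma IsBallotSet.card_compl {S : Finset (Fin (2 * d))} (hS : IsBallotSet d S) : #Sᶜ = d := by
  rw [Finset.card_compl, Fintype.card_fin, hS.1]
  omega

def IsBallotSet.toDyckWord {S : Finset (Fin (2 * d))} (hS : IsBallotSet d S) : DyckWord where
  toList := stepWord S
  count_U_eq_count_D := by rw [count_U_stepWord, count_D_stepWord, hS.1, hS.card_compl]
  count_D_le_count_U t := by
    rw [count_U_take_stepWord, count_D_take_stepWord]
    exact hS.2 t

lemma IsBallotSet.semilength_toDyckWord {S : Finset (Fin (2 * d))} (hS : IsBallotSet d S) :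
    hS.toDyckWord.semilength = d :=
  (count_U_stepWord S).trans hS.1

lemma bijective_toDyckWord :
    Function.Bijective fun S : {S // IsBallotSet d S} =>
      (⟨S.2.toDyckWord, S.2.semilength_toDyckWord⟩ : {p : DyckWord // p.semilength = d}) := by
  refine ⟨fun S T h => Subtype.ext (stepWord_injective (congrArg (·.1.toList) h)), ?_⟩
  rintro ⟨p, hp⟩
  have hlen : p.toList.length = 2 * d := by rw [← p.two_mul_semilength_eq_length, hp]
  have hword := stepWord_filter_eq_U p.toList hlen
  set S : Finset (Fin (2 * d)) := {v | p.toList[v.val]'(by omega) = U}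
  have hS : IsBallotSet d S := by
    refine ⟨by rw [← count_U_stepWord, hword]; exact hp, fun t => ?_⟩
    rw [← count_U_take_stepWord S, ← count_D_take_stepWord S, hword]
    exact p.count_D_le_count_U t
  exact ⟨⟨S, hS⟩, Subtype.ext (DyckWord.ext hword)⟩

end Dyck

section TableauBallot

variable {d : ℕ}

lemma StrictMono.eq_of_image_univ_eq {α : Type*} [LinearOrder α] {f g : Fin d → α}
    (hf : StrictMono f) (hg : StrictMono g) (h : univ.image f = univ.image g) : f = g := by
  refine (hf.range_inj hg).mp ?_
  rw [← Set.image_univ, ← Set.image_univ, ← coe_univ, ← coe_image, ← coe_image, h]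

lemma card_filter_image_val_lt {g : Fin d → Fin n} (hg : Function.Injective g) (t : ℕ) :
    #{v ∈ univ.image g | v.val < t} = #{i | (g i).val < t} := by
  rw [filter_image, card_image_of_injective _ hg]

lemma le_of_forall_card_lt_le {a b : Fin d → ℕ} (ha : StrictMono a) (hb : StrictMono b)
    (h : ∀ t, #{i | a i < t} ≤ #{i | b i < t}) (i : Fin d) : b i ≤ a i := by
  by_contra! hab
  have hle := h (a i + 1)
  have hlow : #(Iic i) ≤ #{j | a j < a i + 1} :=
    card_le_card fun j hj => by simpa [Nat.lt_succ_iff] using ha.monotone (mem_Iic.mp hj)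
  have hup : #{j | b j < a i + 1} ≤ #(Iio i) :=
    card_le_card fun j hj => mem_Iio.mpr (hb.lt_iff_lt.mp (by simp at hj; omega))
  rw [Fin.card_Iic] at hlow
  rw [Fin.card_Iio] at hup
  omega

def oddValues (σ : Equiv.Perm (Fin (2 * d))) : Finset (Fin (2 * d)) :=
  univ.image (σ ∘ oddPos)

lemma compl_oddValues (σ : Equiv.Perm (Fin (2 * d))) :
    (oddValues σ)ᶜ = univ.image (σ ∘ evenPos) := by
  ext v
  obtain ⟨i, ⟨hi, -⟩ | ⟨hi, -⟩⟩ := evenPos_or_oddPos (σ.symm v) <;>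
    rw [σ.symm_apply_eq] at hi <;> subst hi <;>
    simp [oddValues, evenPos_ne_oddPos, (evenPos_ne_oddPos _ _).symm, evenPos_injective.eq_iff,
      oddPos_injective.eq_iff]

namespace IsTableauPerm

variable {σ : Equiv.Perm (Fin (2 * d))}

lemma isBallotSet_oddValues (hσ : IsTableauPerm σ) : IsBallotSet d (oddValues σ) := by
  refine ⟨?_, fun t => ?_⟩
  · rw [oddValues, card_image_of_injective _ (σ.injective.comp oddPos_injective), card_univ,
      Fintype.card_fin]
  · rw [compl_oddValues, oddValues, card_filter_image_val_lt (σ.injective.comp evenPos_injective),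
      card_filter_image_val_lt (σ.injective.comp oddPos_injective)]
    exact card_le_card fun i hi => by
      simp only [mem_filter, mem_univ, true_and, Function.comp_apply] at hi ⊢
      exact (Fin.lt_def.mp (hσ.odd_lt_even i)).trans hi

lemma eq_of_oddValues_eq {τ : Equiv.Perm (Fin (2 * d))} (hσ : IsTableauPerm σ)
    (hτ : IsTableauPerm τ) (h : oddValues σ = oddValues τ) : σ = τ := by
  have hodd := hσ.strictMono_odd.eq_of_image_univ_eq hτ.strictMono_odd h
  have heven := hσ.strictMono_even.eq_of_image_univ_eq hτ.strictMono_even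
    (by rw [← compl_oddValues, ← compl_oddValues, h])
  ext p : 1
  obtain ⟨i, ⟨rfl, -⟩ | ⟨rfl, -⟩⟩ := evenPos_or_oddPos p
  · exact congrFun heven i
  · exact congrFun hodd i

end IsTableauPerm

def interleave {α : Type*} (a b : Fin d → α) (p : Fin (2 * d)) : α :=
  if (p : ℕ) % 2 = 0 then a ⟨p / 2, by omega⟩ else b ⟨p / 2, by omega⟩

@[simp] lemma interleave_evenPos {α : Type*} (a b : Fin d → α) (i : Fin d) :
    interleave a b (evenPos i) = a i := by
  simp [interleave, evenPos]

@[simp] lemma interleave_oddPos {α : Type*} (a b : Fin d → α) (i : Fin d) :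
    interleave a b (oddPos i) = b i := by
  have : (2 * (i : ℕ) + 1) / 2 = i := by omega
  simp [interleave, oddPos, this]

lemma interleave_injective {α : Type*} {a b : Fin d → α} (ha : Function.Injective a)
    (hb : Function.Injective b) (hab : ∀ i j, a i ≠ b j) :
    Function.Injective (interleave a b) := by
  intro p q h
  obtain ⟨i, ⟨rfl, -⟩ | ⟨rfl, -⟩⟩ := evenPos_or_oddPos p <;>
    obtain ⟨j, ⟨rfl, -⟩ | ⟨rfl, -⟩⟩ := evenPos_or_oddPos q <;>
    simp only [interleave_evenPos, interleave_oddPos] at h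
  · rw [ha h]
  · exact absurd h (hab i j)
  · exact absurd h.symm (hab j i)
  · rw [hb h]

lemma IsBallotSet.exists_isTableauPerm {S : Finset (Fin (2 * d))} (hS : IsBallotSet d S) :
    ∃ σ, IsTableauPerm σ ∧ oddValues σ = S := by
  set a := Sᶜ.orderEmbOfFin hS.card_compl
  set b := S.orderEmbOfFin hS.1
  have ha : univ.image a = Sᶜ := image_orderEmbOfFin_univ _ _
  have hb : univ.image b = S := image_orderEmbOfFin_univ _ _
  have hab : ∀ i j, a i ≠ b j := fun i j h =>
    (mem_compl.mp (orderEmbOfFin_mem _ _ i)) (h ▸ orderEmbOfFin_mem _ _ j)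
  have hba : ∀ i, b i < a i := fun i => by
    refine (le_of_forall_card_lt_le (a := fun i => (a i : ℕ)) (b := fun i => (b i : ℕ))
      (fun _ _ h => a.strictMono h) (fun _ _ h => b.strictMono h) (fun t => ?_) i).lt_of_ne
      (fun h => hab i i (Fin.ext h).symm)
    rw [← card_filter_image_val_lt a.injective, ← card_filter_image_val_lt b.injective, ha, hb]
    exact hS.2 t
  set σ := Equiv.ofBijective _ (Finite.injective_iff_bijective.mp
    (interleave_injective a.injective b.injective hab))
  refine ⟨σ, ⟨fun i j h => ?_, fun i j h => ?_, fun i => ?_⟩, ?_⟩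
  · simpa [σ] using a.strictMono h
  · simpa [σ] using b.strictMono h
  · simpa [σ] using hba i
  · simpa [oddValues, σ, Function.comp_def] using hb

lemma bijective_oddValues :
    Function.Bijective fun σ : {σ : Equiv.Perm (Fin (2 * d)) // IsTableauPerm σ} =>
      (⟨oddValues σ.1, σ.2.isBallotSet_oddValues⟩ : {S // IsBallotSet d S}) := by
  refine ⟨fun σ τ h => Subtype.ext (σ.2.eq_of_oddValues_eq τ.2 (congrArg Subtype.val h)),
    fun S => ?_⟩
  obtain ⟨σ, hσ, hS⟩ := S.2.exists_isTableauPerm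
  exact ⟨⟨σ, hσ⟩, Subtype.ext hS⟩

end TableauBallot

theorem card_minimal_of_size_two_mul_eq_catalan_general (d : ℕ) :
    {σ : Equiv.Perm (Fin (2 * d)) | MinimalWithDescents d σ}.ncard =
      (2 * d).choose d / (d + 1) := by
  have hset :
      {σ : Equiv.Perm (Fin (2 * d)) | MinimalWithDescents d σ} = {σ | IsTableauPerm σ} :=
    Set.ext fun σ => ⟨MinimalWithDescents.isTableauPerm, IsTableauPerm.minimalWithDescents⟩
  calc {σ : Equiv.Perm (Fin (2 * d)) | MinimalWithDescents d σ}.ncard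
      = Nat.card {σ : Equiv.Perm (Fin (2 * d)) // IsTableauPerm σ} := by
        rw [hset, ← Nat.card_coe_set_eq]
        rfl
    _ = Nat.card {S // IsBallotSet d S} := Nat.card_eq_of_bijective _ bijective_oddValues
    _ = Nat.card {p : DyckWord // p.semilength = d} :=
        Nat.card_eq_of_bijective _ bijective_toDyckWord
    _ = catalan d := by
        rw [Nat.card_eq_fintype_card, DyckWord.card_dyckWord_semilength_eq_catalan]
    _ = (2 * d).choose d / (d + 1) := catalan_eq_centralBinom_div d

/-- The minimal permutations with `d` descents of size `2d` are counted by the `d`-th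
Catalan number `C_d = (1 / (d + 1)) * binom (2d) d`. -/
theorem card_minimal_of_size_two_mul_eq_catalan (d : ℕ) (hd : 1 ≤ d) :
    {σ : Equiv.Perm (Fin (2 * d)) | MinimalWithDescents d σ}.ncard =
      (2 * d).choose d / (d + 1) :=
  card_minimal_of_size_two_mul_eq_catalan_general d
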